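/- Let F(x,t) = Σ_{n≥0} Σ_{μ ∈ M_n} t^{asc(μ)} x^n be the bivariate generating function for Motzkin paths by length and number of ascents, as a formal power series in x with polynomial coefficients in t. Then F satisfies the functional equation (x² + x³(t−1))·F(x,t)² − (1 − x − x²(t−1))·F(x,t) + 1 = 0. -/

import Mathlib

inductive Step : Type
  | U | F | D
  deriving DecidableEq

instance instFintypeStep : Fintype Step :=
  ⟨⟨{Step.U, Step.F, Step.D}, by decide⟩, fun x => by cases x <;> decide⟩

def stepVal : Step → ℤ
  | .U => 1
  | .F => 0
  | .D => -1

/-- Height of the path after the first `i` steps. -/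
def ht (p : List Step) (i : ℕ) : ℤ := ((p.take i).map stepVal).sum

/-- A Motzkin path: starts and ends at height 0 and stays nonnegative. -/
def IsMotzkin (p : List Step) : Prop :=
  ht p p.length = 0 ∧ ∀ i ≤ p.length, 0 ≤ ht p i

instance : DecidablePred IsMotzkin := fun p => by
  unfold IsMotzkin; infer_instance

/-- Number of ascents: maximal runs of up steps (counted at their last up step). -/
def asc (p : List Step) : ℕ :=
  ((List.range p.length).filter
    (fun i => p[i]? == some Step.U && p[i+1]? != some Step.U)).length

/-- Number of occurrences of `w` as a consecutive subword of `p`. -/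
def countSubword (w p : List Step) : ℕ :=
  ((List.range p.length).filter (fun i => w.isPrefixOf (p.drop i))).length

/-- Number of plateaus: occurrences of a subword U F^k D for some k ≥ 0. -/
def plt (p : List Step) : ℕ :=
  ((List.range p.length).filter (fun i =>
    (List.range p.length).any (fun k =>
      (Step.U :: (List.replicate k Step.F ++ [Step.D])).isPrefixOf (p.drop i)))).length
open PowerSeries Polynomial

/-- The generating function F(x,t) = Σ_n Σ_{μ ∈ M_n} t^{asc μ} x^n for Motzkin paths
by length and number of ascents, as a power series in x over ℚ[t]. -/
noncomputable def Fasc : PowerSeries (Polynomial ℚ) :=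
  PowerSeries.mk fun n =>
    ∑ f : Fin n → Step,
      if IsMotzkin (List.ofFn f) then (Polynomial.X : Polynomial ℚ) ^ asc (List.ofFn f) else 0

/-!
A Motzkin path is empty, starts with `F`, or starts with `U`; hence `F = 1 + x F + B`, where `B`
counts the paths starting with `U`. By the first-return decomposition such a path is uniquely
`U μ' D μ` with `μ'`, `μ` Motzkin, and its ascents are those of `U μ'` plus those of `μ`. The
leading `U` opens a new ascent exactly when `μ'` does not start with `U`, so `B = x² (t F + (1 - t) B) F`.
Eliminating `B` gives the quadratic equation.
-/

lemma stepVal_eq_neg_one_iff : ∀ s, stepVal s = -1 ↔ s = .D := by decide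

lemma neg_one_le_stepVal : ∀ s, -1 ≤ stepVal s := by decide

section Height

variable (p l m : List Step) (a : Step)

@[simp] lemma ht_zero : ht p 0 = 0 := rfl

lemma ht_cons_succ (i : ℕ) : ht (a :: p) (i + 1) = stepVal a + ht p i := by
  simp [ht, List.take_succ_cons]

lemma ht_add (i j : ℕ) : ht p (i + j) = ht p i + ht (p.drop i) j := by
  simp [ht, List.take_add]

lemma ht_succ {i : ℕ} (hi : i < p.length) : ht p (i + 1) = ht p i + stepVal p[i] := by
  rw [ht_add, List.drop_eq_getElem_cons hi, ht_cons_succ]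
  simp

lemma ht_of_length_le {i : ℕ} (hi : p.length ≤ i) : ht p i = ht p p.length := by
  simp [ht, List.take_of_length_le hi]

lemma ht_take (i j : ℕ) : ht (p.take j) i = ht p (min i j) := by
  simp [ht, List.take_take]

lemma ht_append_of_le {i : ℕ} (hi : i ≤ l.length) : ht (l ++ m) i = ht l i := by
  simp [ht, List.take_append_of_le_length hi]

lemma ht_append_add (i : ℕ) : ht (l ++ m) (l.length + i) = ht l l.length + ht m i := by
  simp [ht_add, ht_append_of_le]

end Height

lemma isMotzkin_iff {p : List Step} : IsMotzkin p ↔ ht p p.length = 0 ∧ ∀ i, 0 ≤ ht p i := by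
  refine and_congr_right fun hp => ⟨fun h i => ?_, fun h i _ => h i⟩
  rcases le_total i p.length with hi | hi
  · exact h i hi
  · rw [ht_of_length_le p hi, hp]

lemma isMotzkin_nil : IsMotzkin [] :=
  ⟨rfl, fun i _ => by simp [ht]⟩

lemma isMotzkin_cons_F {p : List Step} : IsMotzkin (.F :: p) ↔ IsMotzkin p := by
  simp only [isMotzkin_iff, List.length_cons, ht_cons_succ, stepVal, zero_add]
  refine and_congr_right fun _ => ⟨fun h i => by simpa [ht_cons_succ, stepVal] using h (i + 1),
    fun h i => ?_⟩
  cases i with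
  | zero => rfl
  | succ i => simpa [ht_cons_succ, stepVal] using h i

lemma not_isMotzkin_cons_D (p : List Step) : ¬ IsMotzkin (.D :: p) := fun h => by
  simpa [ht_cons_succ, stepVal] using h.2 1 (by simp)

lemma ht_append_D_cons {μ' : List Step} (hμ' : ht μ' μ'.length = 0) (μ : List Step) (i : ℕ) :
    ht (μ' ++ .D :: μ) (μ'.length + 1 + i) = -1 + ht μ i := by
  rw [add_assoc, ht_append_add, hμ', ht_add, ht_cons_succ]
  simp [stepVal]

lemma isMotzkin_U_cons_append_D_cons {μ' μ : List Step} (hμ' : IsMotzkin μ') (hμ : IsMotzkin μ) :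
    IsMotzkin (.U :: (μ' ++ .D :: μ)) := by
  rw [isMotzkin_iff] at hμ' hμ ⊢
  have hlen : (μ' ++ .D :: μ).length = μ'.length + 1 + μ.length := by simp; omega
  refine ⟨by rw [List.length_cons, ht_cons_succ, hlen, ht_append_D_cons hμ'.1, hμ.1]; rfl,
    fun i => ?_⟩
  rcases i with _ | k
  · rfl
  rw [ht_cons_succ, stepVal]
  rcases le_or_gt k μ'.length with hk | hk
  · rw [ht_append_of_le _ _ hk]
    linarith [hμ'.2 k]
  · obtain ⟨j, rfl⟩ := Nat.exists_eq_add_of_lt hk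
    rw [add_right_comm, ht_append_D_cons hμ'.1]
    linarith [hμ.2 j]

lemma length_le_of_append_D_cons_eq {μ₁' μ₁ μ₂' μ₂ : List Step} (h₁ : ht μ₁' μ₁'.length = 0)
    (h₂ : IsMotzkin μ₂') (h : μ₁' ++ .D :: μ₁ = μ₂' ++ .D :: μ₂) : μ₂'.length ≤ μ₁'.length := by
  by_contra! hlt
  have hret := ht_append_D_cons h₁ μ₁ 0
  rw [h, ht_append_of_le _ _ (by omega)] at hret
  linarith [h₂.2 _ hlt, ht_zero μ₁]

lemma eq_of_append_D_cons_eq {μ₁' μ₁ μ₂' μ₂ : List Step} (h₁ : IsMotzkin μ₁')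
    (h₂ : IsMotzkin μ₂') (h : μ₁' ++ .D :: μ₁ = μ₂' ++ .D :: μ₂) : μ₁' = μ₂' ∧ μ₁ = μ₂ := by
  obtain ⟨h', h''⟩ := List.append_inj h <| le_antisymm
    (length_le_of_append_D_cons_eq h₂.1 h₁ h.symm) (length_le_of_append_D_cons_eq h₁.1 h₂ h)
  exact ⟨h', List.cons_injective h''⟩

lemma exists_eq_append_D_cons {r : List Step} (hlow : ∀ i, -1 ≤ ht r i)
    (hend : ht r r.length = -1) : ∃ μ' μ, IsMotzkin μ' ∧ IsMotzkin μ ∧ r = μ' ++ .D :: μ := by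
  classical
  have hex : ∃ j, ht r j < 0 := ⟨r.length, by omega⟩
  obtain ⟨m, hm⟩ : ∃ m, Nat.find hex = m + 1 :=
    Nat.exists_eq_succ_of_ne_zero fun h0 => by simpa [h0] using Nat.find_spec hex
  have hneg : ht r (m + 1) < 0 := hm ▸ Nat.find_spec hex
  have hbefore : ∀ i ≤ m, 0 ≤ ht r i := fun i hi => not_lt.1 (Nat.find_min hex (by omega))
  have hmlt : m + 1 ≤ r.length := hm ▸ Nat.find_min' hex (show ht r r.length < 0 by omega)
  have hret : ht r (m + 1) = -1 := by linarith [hlow (m + 1)]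
  have hstep := ht_succ r hmlt
  have hm0 : ht r m = 0 := by linarith [hbefore m le_rfl, neg_one_le_stepVal r[m]]
  have hD : r[m] = .D := (stepVal_eq_neg_one_iff _).1 (by linarith)
  refine ⟨r.take m, r.drop (m + 1), isMotzkin_iff.2 ⟨?_, fun i => ?_⟩,
    isMotzkin_iff.2 ⟨?_, fun i => ?_⟩, ?_⟩
  · rwa [ht_take, List.length_take, min_eq_left (by omega : m ≤ r.length), min_self]
  · rw [ht_take]
    exact hbefore _ (min_le_right _ _)
  · have := ht_add r (m + 1) (r.drop (m + 1)).length
    rw [ht_of_length_le r (by simp; omega), hend, hret] at this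
    omega
  · linarith [ht_add r (m + 1) i, hlow (m + 1 + i)]
  · rw [← hD, ← List.drop_eq_getElem_cons hmlt, List.take_append_drop]

lemma IsMotzkin.exists_eq_U_cons_append_D_cons {p : List Step} (hp : IsMotzkin p)
    (hU : p.head? = some .U) :
    ∃ μ' μ, IsMotzkin μ' ∧ IsMotzkin μ ∧ p = .U :: (μ' ++ .D :: μ) := by
  obtain ⟨r, rfl⟩ : ∃ r, p = .U :: r := ⟨p.tail, (List.cons_head?_tail hU).symm⟩
  have hstep : ∀ i, ht (.U :: r) (i + 1) = 1 + ht r i := ht_cons_succ r .U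
  rw [isMotzkin_iff, List.length_cons, hstep] at hp
  obtain ⟨μ', μ, hμ', hμ, rfl⟩ := exists_eq_append_D_cons (r := r)
    (fun i => by linarith [hp.2 (i + 1), hstep i]) (by linarith [hp.1])
  exact ⟨μ', μ, hμ', hμ, rfl⟩

lemma asc_nil : asc [] = 0 := rfl

lemma asc_cons (a : Step) (l : List Step) :
    asc (a :: l) = asc l + if a = .U ∧ l.head? ≠ some .U then 1 else 0 := by
  have hhead : ((a :: l)[0]? == some .U && (a :: l)[0 + 1]? != some .U) =
      decide (a = .U ∧ l.head? ≠ some .U) := by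
    rcases l with _ | ⟨b, l⟩
    · cases a <;> simp
    · cases a <;> cases b <;> simp
  unfold asc
  rw [List.length_cons, List.range_succ_eq_map, List.filter_cons, List.filter_map, hhead]
  by_cases h : a = .U ∧ l.head? ≠ some .U <;> simp [h, Function.comp_def, add_comm]

lemma asc_append (l : List Step) {m : List Step} (hm : m.head? ≠ some .U) :
    asc (l ++ m) = asc l + asc m := by
  induction l with
  | nil => simp [asc_nil]
  | cons a l ih =>
    cases l with
    | nil => by_cases ha : a = .U <;> simp [asc_cons, ha, hm, asc_nil, add_comm]
    | cons b l => rw [List.cons_append, asc_cons, asc_cons, ih]; simp; ring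

section GeneratingFunctions

open Finset

def motzkinPaths (n : ℕ) : Finset (List Step) :=
  ((univ : Finset (Fin n → Step)).map ⟨List.ofFn, List.ofFn_injective⟩).filter IsMotzkin

lemma mem_motzkinPaths {n : ℕ} {p : List Step} :
    p ∈ motzkinPaths n ↔ p.length = n ∧ IsMotzkin p := by
  simp only [motzkinPaths, mem_filter, mem_map, mem_univ, true_and, Function.Embedding.coeFn_mk]
  refine and_congr_left fun _ => ⟨?_, ?_⟩
  · rintro ⟨f, rfl⟩
    exact List.length_ofFn
  · rintro rfl
    exact ⟨_, List.ofFn_getElem⟩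

lemma motzkinPaths_zero : motzkinPaths 0 = {[]} := by
  ext p
  simp only [mem_motzkinPaths, List.length_eq_zero_iff, mem_singleton]
  exact ⟨And.left, fun h => ⟨h, h ▸ isMotzkin_nil⟩⟩

lemma coeff_Fasc (n : ℕ) : coeff n Fasc = ∑ p ∈ motzkinPaths n, Polynomial.X ^ asc p := by
  simp [Fasc, motzkinPaths, sum_filter]

lemma map_cons_F_motzkinPaths (n : ℕ) :
    (motzkinPaths n).map ⟨List.cons .F, List.cons_injective⟩ =
      (motzkinPaths (n + 1)).filter (·.head? ≠ some .U) := by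
  ext p
  simp only [mem_map, mem_filter, mem_motzkinPaths, Function.Embedding.coeFn_mk]
  rcases p with _ | ⟨a, q⟩
  · simp
  · cases a
    · simp
    · simp [isMotzkin_cons_F]
    · simp [not_isMotzkin_cons_D]

noncomputable def FascUp : PowerSeries ℚ[X] :=
  mk fun n => ∑ p ∈ (motzkinPaths n).filter (·.head? = some .U), Polynomial.X ^ asc p

lemma Fasc_eq_one_add_X_mul_add_FascUp : Fasc = 1 + PowerSeries.X * Fasc + FascUp := by
  ext (_ | n)
  · simp [coeff_Fasc, FascUp, motzkinPaths_zero, asc_nil]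
  · rw [map_add, map_add, coeff_succ_X_mul, coeff_Fasc, coeff_Fasc, FascUp, coeff_mk,
      PowerSeries.coeff_one, if_neg n.succ_ne_zero, zero_add,
      ← sum_filter_not_add_sum_filter _ (·.head? = some .U), ← map_cons_F_motzkinPaths, sum_map]
    simp [asc_cons]

/-- `t^asc(U μ')` is what the arch `U μ' D` contributes to the ascents of `U μ' D μ`. -/
noncomputable def FascConsUp : PowerSeries ℚ[X] :=
  mk fun n => ∑ p ∈ motzkinPaths n, Polynomial.X ^ asc (.U :: p)

lemma FascConsUp_eq_C_X_mul_Fasc_add :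
    FascConsUp = PowerSeries.C Polynomial.X * Fasc + (1 - PowerSeries.C Polynomial.X) * FascUp := by
  refine PowerSeries.ext fun n => ?_
  rw [← map_one PowerSeries.C, ← map_sub, map_add, PowerSeries.coeff_C_mul,
    PowerSeries.coeff_C_mul, coeff_Fasc, FascUp, FascConsUp, coeff_mk, coeff_mk,
    ← sum_filter_add_sum_filter_not _ (·.head? = some .U),
    ← sum_filter_add_sum_filter_not (motzkinPaths n) (·.head? = some .U)]
  have hUp : ∀ p ∈ (motzkinPaths n).filter (·.head? = some .U),
      Polynomial.X ^ asc (.U :: p) = (Polynomial.X : ℚ[X]) ^ asc p := fun p hp => by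
    simp [asc_cons, (mem_filter.1 hp).2]
  have hNotUp : ∀ p ∈ (motzkinPaths n).filter (·.head? ≠ some .U),
      Polynomial.X ^ asc (.U :: p) = Polynomial.X * (Polynomial.X : ℚ[X]) ^ asc p := fun p hp => by
    simp [asc_cons, (mem_filter.1 hp).2, pow_succ']
  rw [sum_congr rfl hUp, sum_congr rfl hNotUp, ← mul_sum]
  ring

lemma sum_filter_head_U_motzkinPaths (n : ℕ) :
    ∑ p ∈ (motzkinPaths (n + 2)).filter (·.head? = some .U), (Polynomial.X : ℚ[X]) ^ asc p =
      ∑ ij ∈ antidiagonal n, ∑ q ∈ motzkinPaths ij.1 ×ˢ motzkinPaths ij.2,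
        Polynomial.X ^ (asc (.U :: q.1) + asc q.2) := by
  rw [sum_sigma']
  symm
  refine sum_bij (fun x _ => .U :: (x.2.1 ++ .D :: x.2.2)) ?_ ?_ ?_ ?_
  · rintro ⟨⟨i, j⟩, μ', μ⟩ hx
    simp only [mem_sigma, HasAntidiagonal.mem_antidiagonal, mem_product, mem_motzkinPaths] at hx
    obtain ⟨hij, ⟨rfl, hμ'⟩, ⟨rfl, hμ⟩⟩ := hx
    simp only [mem_filter, mem_motzkinPaths, List.length_cons, List.length_append, List.head?_cons]
    exact ⟨⟨by omega, isMotzkin_U_cons_append_D_cons hμ' hμ⟩, trivial⟩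
  · rintro ⟨⟨i₁, j₁⟩, μ₁', μ₁⟩ hx₁ ⟨⟨i₂, j₂⟩, μ₂', μ₂⟩ hx₂ h
    simp only [mem_sigma, HasAntidiagonal.mem_antidiagonal, mem_product,
      mem_motzkinPaths] at hx₁ hx₂
    obtain ⟨rfl, rfl⟩ := eq_of_append_D_cons_eq hx₁.2.1.2 hx₂.2.1.2 (List.cons_injective h)
    obtain ⟨-, ⟨rfl, -⟩, ⟨rfl, -⟩⟩ := hx₁
    obtain ⟨-, ⟨rfl, -⟩, ⟨rfl, -⟩⟩ := hx₂
    rfl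
  · intro p hp
    simp only [mem_filter, mem_motzkinPaths] at hp
    obtain ⟨⟨hlen, hp⟩, hU⟩ := hp
    obtain ⟨μ', μ, hμ', hμ, rfl⟩ := hp.exists_eq_U_cons_append_D_cons hU
    refine ⟨⟨(μ'.length, μ.length), μ', μ⟩, ?_, rfl⟩
    simp only [mem_sigma, HasAntidiagonal.mem_antidiagonal, mem_product, mem_motzkinPaths,
      true_and]
    simp only [List.length_cons, List.length_append] at hlen
    exact ⟨by omega, hμ', hμ⟩
  · rintro ⟨_, μ', μ⟩ -
    rw [← List.cons_append, asc_append _ (by simp), asc_cons .D]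
    simp

lemma FascUp_eq_X_sq_mul_FascConsUp_mul_Fasc : FascUp = PowerSeries.X ^ 2 * FascConsUp * Fasc := by
  refine PowerSeries.ext fun N => ?_
  rw [mul_assoc, PowerSeries.coeff_X_pow_mul', FascUp, coeff_mk]
  rcases lt_or_ge N 2 with hN | hN
  · rw [if_neg (by omega), sum_eq_zero]
    intro p hp
    simp only [mem_filter, mem_motzkinPaths] at hp
    obtain ⟨⟨hlen, hp⟩, hU⟩ := hp
    obtain ⟨μ', μ, -, -, rfl⟩ := hp.exists_eq_U_cons_append_D_cons hU
    simp only [List.length_cons, List.length_append] at hlen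
    omega
  · obtain ⟨n, rfl⟩ := Nat.exists_eq_add_of_le' hN
    rw [if_pos hN, Nat.add_sub_cancel, sum_filter_head_U_motzkinPaths, PowerSeries.coeff_mul]
    refine sum_congr rfl fun ij _ => ?_
    rw [FascConsUp, coeff_mk, coeff_Fasc, sum_mul_sum, sum_product]
    simp only [pow_add]

end GeneratingFunctions

/-- F(x,t) satisfies (x² + x³(t−1))F² − (1 − x − x²(t−1))F + 1 = 0. -/
theorem ascents_functional_equation :
    (PowerSeries.X ^ 2 + PowerSeries.X ^ 3 * (PowerSeries.C (R := Polynomial ℚ) Polynomial.X - 1))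
        * Fasc ^ 2
      - (1 - PowerSeries.X - PowerSeries.X ^ 2
          * (PowerSeries.C (R := Polynomial ℚ) Polynomial.X - 1)) * Fasc
      + 1 = 0 := by
  linear_combination
    (PowerSeries.X ^ 2 * (1 - PowerSeries.C Polynomial.X) * Fasc - 1) *
        Fasc_eq_one_add_X_mul_add_FascUp
      - FascUp_eq_X_sq_mul_FascConsUp_mul_Fasc
      - PowerSeries.X ^ 2 * Fasc * FascConsUp_eq_C_X_mul_Fasc_add
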